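/- Let λ ∈ V be a dominant weight, w ∈ W, and suppose μ ∈ P_λ^w. Then for every index 1 ≤ i ≤ r and every pair u, v ∈ W satisfying w⁻¹ * v ≤ u, the inequality ⟨λ, u x_i⟩ ≤ ⟨μ, v x_i⟩ holds. -/

import Mathlib

open scoped Classical

/-- Data of a root system with a fixed choice of simple roots: an ambient
`ℚ`-vector space `V`, a set of roots `Φ` with a distinguished subset `pos` of
positive roots, a coroot functional `coroot β = ⟨·, β^∨⟩` for each root, and
simple roots `α 1, …, α r`. -/
structure RootData where
  r : ℕ
  V : Type
  [grp : AddCommGroup V]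
  [mod : Module ℚ V]
  Φ : Set V
  pos : Set V
  coroot : V → Module.Dual ℚ V
  α : Fin r → V

attribute [instance] RootData.grp RootData.mod

namespace RootData

variable (R : RootData)

/-- The group of linear automorphisms of `V`, in which the Weyl group lives. -/
abbrev Aut : Type := R.V ≃ₗ[ℚ] R.V

/-- The linear map `v ↦ v - ⟨v, β^∨⟩ β`. -/
noncomputable def reflMap (β : R.V) : R.V →ₗ[ℚ] R.V :=
  LinearMap.id - (R.coroot β).smulRight β

/-- The reflection `s_β` associated to a root `β`, as a linear automorphism. -/
noncomputable def s (β : R.V) : R.Aut :=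
  if h : (R.reflMap β).comp (R.reflMap β) = LinearMap.id then
    LinearEquiv.ofLinear (R.reflMap β) (R.reflMap β) h h
  else LinearEquiv.refl ℚ R.V

/-- The simple reflections `s_i := s_{α_i}`. -/
noncomputable def S (i : Fin R.r) : R.Aut := R.s (R.α i)

/-- The Weyl group `W`, generated by the simple reflections. -/
noncomputable def weylGroup : Subgroup R.Aut := Subgroup.closure (Set.range R.S)

/-- The product `s_{i_1} ⋯ s_{i_k}` of a word in the simple reflections. -/
noncomputable def wordProd (l : List (Fin R.r)) : R.Aut := (l.map R.S).prod

/-- The length function on `W`: least length of a word in the simple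
reflections expressing the given element. -/
noncomputable def len (w : R.Aut) : ℕ :=
  sInf {n | ∃ l : List (Fin R.r), l.length = n ∧ R.wordProd l = w}

/-- A word is reduced if its length equals the length of its product. -/
def Reduced (l : List (Fin R.r)) : Prop := R.len (R.wordProd l) = l.length

/-- The Bruhat order on `W`: `u ≤ w` iff some reduced word for `w` has a
subword whose product is `u`. -/
def BruhatLE (u w : R.Aut) : Prop :=
  ∃ l : List (Fin R.r), R.Reduced l ∧ R.wordProd l = w ∧
    ∃ l' : List (Fin R.r), l'.Sublist l ∧ R.wordProd l' = u

/-- Strict Bruhat order. -/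
def BruhatLT (u w : R.Aut) : Prop := R.BruhatLE u w ∧ u ≠ w

/-- One step of the Demazure product: `s_i * w := max {w, s_i w}`. -/
noncomputable def dmulStep (i : Fin R.r) (x : R.Aut) : R.Aut :=
  if R.len x < R.len (R.S i * x) then R.S i * x else x

/-- Demazure product of a word in the simple reflections against `w`:
`s_{i_1} * (s_{i_2} * (⋯ * (s_{i_k} * w)))`. -/
noncomputable def dmulList (l : List (Fin R.r)) (w : R.Aut) : R.Aut :=
  l.foldr R.dmulStep w

/-- The Demazure product `v * w` on the Weyl group, computed by choosing a
reduced word for `v` (it is independent of this choice). -/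
noncomputable def dmul (v w : R.Aut) : R.Aut :=
  if h : ∃ l : List (Fin R.r), R.Reduced l ∧ R.wordProd l = v then
    R.dmulList h.choose w
  else v * w

/-- The parabolic subgroup `W_{P_i}` generated by the simple reflections
`s_j`, `j ≠ i`. -/
noncomputable def WPar (i : Fin R.r) : Subgroup R.Aut :=
  Subgroup.closure (R.S '' {j | j ≠ i})

/-- `W^{P_i}`: the set of minimal-length representatives of cosets of
`W/W_{P_i}`. -/
def minReps (i : Fin R.r) : Set R.Aut :=
  {v | v ∈ R.weylGroup ∧ ∀ p ∈ R.WPar i, R.len v ≤ R.len (v * p)}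

/-- `u` is the minimal-length representative of the coset `w W_{P_i}`. -/
def IsMinRep (i : Fin R.r) (u w : R.Aut) : Prop :=
  u ∈ R.minReps i ∧ u⁻¹ * w ∈ R.WPar i

/-- A weight is dominant if it pairs nonnegatively with every simple coroot. -/
def Dominant (lam : R.V) : Prop := ∀ i : Fin R.r, 0 ≤ R.coroot (R.α i) lam

/-- The dual action of the Weyl group on `V* `: `(u f)(v) = f(u⁻¹ v)`. -/
noncomputable def dualAct (u : R.Aut) (f : Module.Dual ℚ R.V) : Module.Dual ℚ R.V :=
  f.comp (u.symm : R.V →ₗ[ℚ] R.V)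

/-- The Demazure polytope `P_λ^w := conv {uλ : u ∈ W, u ≤ w}`. -/
noncomputable def demPolytope (lam : R.V) (w : R.Aut) : Set R.V :=
  convexHull ℚ {m | ∃ u : R.Aut, u ∈ R.weylGroup ∧ R.BruhatLE u w ∧ m = u lam}

/-- Membership in the weight lattice `X`. -/
def IsWeight (lam : R.V) : Prop := ∀ β ∈ R.Φ, ∃ m : ℤ, R.coroot β lam = (m : ℚ)

/-- The root lattice `Q = ℤΦ`. -/
noncomputable def rootLattice : AddSubgroup R.V := AddSubgroup.closure R.Φ

/-- `w₀` is the longest element of the Weyl group. -/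
def IsLongest (w₀ : R.Aut) : Prop :=
  w₀ ∈ R.weylGroup ∧ ∀ g ∈ R.weylGroup, R.len g ≤ R.len w₀

/-- The positive roots `Φ_{P_i}⁺ = Φ⁺ ∩ span {α_j : j ≠ i}` of the standard
Levi subsystem. -/
def parPos (i : Fin R.r) : Set R.V :=
  {η | η ∈ R.pos ∧ η ∈ Submodule.span ℚ (R.α '' {j | j ≠ i})}

/-- The value `D_i (e^λ)` of the Demazure operator on a basis element of the
group ring `ℤ[X]`. -/
noncomputable def demOnBasis (i : Fin R.r) (lam : R.V) : R.V →₀ ℤ :=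
  if 0 ≤ ⌊R.coroot (R.α i) lam⌋ then
    ∑ k ∈ Finset.range (⌊R.coroot (R.α i) lam⌋.toNat + 1),
      Finsupp.single (lam - (k : ℚ) • R.α i) 1
  else if ⌊R.coroot (R.α i) lam⌋ = -1 then 0
  else - ∑ k ∈ Finset.range ((-⌊R.coroot (R.α i) lam⌋).toNat - 1),
      Finsupp.single (lam + ((k : ℚ) + 1) • R.α i) 1

/-- The Demazure operator `D_i`, as a `ℤ`-linear endomorphism of the group
ring `ℤ[X]` (realized as finitely supported functions `V →₀ ℤ`). -/
noncomputable def demOp (i : Fin R.r) : (R.V →₀ ℤ) →ₗ[ℤ] (R.V →₀ ℤ) :=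
  Finsupp.lsum ℤ fun lam => LinearMap.toSpanSingleton ℤ (R.V →₀ ℤ) (R.demOnBasis i lam)

/-- The Demazure character `D_{i_1} ⋯ D_{i_k} (e^λ)`. -/
noncomputable def demChar (l : List (Fin R.r)) (lam : R.V) : R.V →₀ ℤ :=
  l.foldr (fun i p => R.demOp i p) (Finsupp.single lam 1)

/-- The axioms of a finite crystallographic root system spanning `V`, with
simple roots `α_i` and positive roots `pos`. -/
structure IsRootSystem (R : RootData) : Prop where
  finite : R.Φ.Finite
  span_top : Submodule.span ℚ R.Φ = ⊤
  ne_zero : ∀ β ∈ R.Φ, β ≠ 0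
  coroot_self : ∀ β ∈ R.Φ, R.coroot β β = 2
  crystallographic : ∀ β ∈ R.Φ, ∀ γ ∈ R.Φ, ∃ m : ℤ, R.coroot β γ = (m : ℚ)
  reflection_stable : ∀ β ∈ R.Φ, ∀ γ ∈ R.Φ, γ - R.coroot β γ • β ∈ R.Φ
  simple_mem : ∀ i, R.α i ∈ R.Φ
  indep : LinearIndependent ℚ R.α
  pos_subset : R.pos ⊆ R.Φ
  pos_or_neg : ∀ β ∈ R.Φ, (β ∈ R.pos ∧ -β ∉ R.pos) ∨ (β ∉ R.pos ∧ -β ∈ R.pos)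
  simple_pos : ∀ i, R.α i ∈ R.pos
  pos_nonneg_comb : ∀ β ∈ R.pos, ∃ c : Fin R.r → ℚ, (∀ i, 0 ≤ c i) ∧ β = ∑ i, c i • R.α i

end RootData

/-!
Since `μ ↦ ⟨μ, v x_i⟩` is linear, it suffices to treat the vertices `μ = u' λ` with `u' ≤ w`.
Then `u'⁻¹` is a subword of a reduced word of `w⁻¹`, and the lifting property of the Bruhat order
shows that the Demazure product dominates all such subword products: `u'⁻¹ v ≤ w⁻¹ * v ≤ u`.
Moving up from `g` to `g s_γ` (with `g γ > 0`) replaces `g⁻¹ λ` by `g⁻¹ λ - ⟨λ, (g γ)^∨⟩ γ`;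
for dominant `λ` the coefficient is nonnegative (write `⟨λ, γ^∨⟩` through the invariant form
`∑_β β^∨ ⊗ β^∨`), and `x_i` is nonnegative on positive roots, so `⟨u⁻¹ λ, x_i⟩ ≤ ⟨v⁻¹ u' λ, x_i⟩`.
The subword and lifting properties are derived from the strong exchange condition, which comes
from the action of `W` on the roots.
-/

namespace RootData

variable {R : RootData} {β γ : R.V} {g h u w : R.Aut}

lemma wordProd_cons (i : Fin R.r) (l : List (Fin R.r)) :
    R.wordProd (i :: l) = R.S i * R.wordProd l := by
  simp [wordProd]

lemma wordProd_append (l l' : List (Fin R.r)) :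
    R.wordProd (l ++ l') = R.wordProd l * R.wordProd l' := by
  simp [wordProd]

lemma S_mem_weylGroup (i : Fin R.r) : R.S i ∈ R.weylGroup :=
  Subgroup.subset_closure ⟨i, rfl⟩

lemma wordProd_mem_weylGroup (l : List (Fin R.r)) : R.wordProd l ∈ R.weylGroup :=
  Subgroup.list_prod_mem (R.weylGroup) fun _ hg => by
    obtain ⟨i, -, rfl⟩ := List.mem_map.mp hg
    exact S_mem_weylGroup i

lemma len_le_length {l : List (Fin R.r)} {g : R.Aut} (h : R.wordProd l = g) :
    R.len g ≤ l.length :=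
  Nat.sInf_le ⟨l, rfl, h⟩

lemma dmulStep_mem_weylGroup (hg : g ∈ R.weylGroup) (i : Fin R.r) :
    R.dmulStep i g ∈ R.weylGroup := by
  unfold dmulStep
  split_ifs
  exacts [mul_mem (S_mem_weylGroup i) hg, hg]

lemma dmulList_mem_weylGroup {v : R.Aut} (hv : v ∈ R.weylGroup) (l : List (Fin R.r)) :
    R.dmulList l v ∈ R.weylGroup := by
  induction l with
  | nil => exact hv
  | cons i l ih => exact dmulStep_mem_weylGroup ih i

namespace IsRootSystem

lemma s_eq_reflection (hR : R.IsRootSystem) (hβ : β ∈ R.Φ) :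
    R.s β = Module.reflection (hR.coroot_self β hβ) := by
  have h : (R.reflMap β).comp (R.reflMap β) = LinearMap.id :=
    LinearMap.ext (Module.involutive_preReflection (hR.coroot_self β hβ))
  rw [s, dif_pos h]
  rfl

lemma s_apply (hR : R.IsRootSystem) (hβ : β ∈ R.Φ) (v : R.V) :
    R.s β v = v - R.coroot β v • β := by
  rw [hR.s_eq_reflection hβ, Module.reflection_apply]

lemma s_apply_self (hR : R.IsRootSystem) (hβ : β ∈ R.Φ) : R.s β β = -β := by
  rw [hR.s_eq_reflection hβ, Module.reflection_apply_self]

lemma s_inv (hR : R.IsRootSystem) (hβ : β ∈ R.Φ) : (R.s β)⁻¹ = R.s β := by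
  rw [hR.s_eq_reflection hβ, Module.reflection_inv]

lemma s_mul_self (hR : R.IsRootSystem) (hβ : β ∈ R.Φ) : R.s β * R.s β = 1 :=
  mul_eq_one_iff_eq_inv.mpr (hR.s_inv hβ).symm

lemma s_apply_mem (hR : R.IsRootSystem) (hβ : β ∈ R.Φ) (hγ : γ ∈ R.Φ) : R.s β γ ∈ R.Φ := by
  rw [hR.s_apply hβ]
  exact hR.reflection_stable β hβ γ hγ

lemma neg_mem (hR : R.IsRootSystem) (hβ : β ∈ R.Φ) : -β ∈ R.Φ := by
  simpa [hR.s_apply_self hβ] using hR.s_apply_mem hβ hβ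

lemma S_mul_self (hR : R.IsRootSystem) (i : Fin R.r) : R.S i * R.S i = 1 :=
  hR.s_mul_self (hR.simple_mem i)

lemma S_inv (hR : R.IsRootSystem) (i : Fin R.r) : (R.S i)⁻¹ = R.S i :=
  hR.s_inv (hR.simple_mem i)

lemma S_mul_S_mul (hR : R.IsRootSystem) (i : Fin R.r) (g : R.Aut) : R.S i * (R.S i * g) = g := by
  rw [← mul_assoc, hR.S_mul_self, one_mul]

lemma S_apply_simple (hR : R.IsRootSystem) (i : Fin R.r) : R.S i (R.α i) = -R.α i :=
  hR.s_apply_self (hR.simple_mem i)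

lemma wordProd_reverse (hR : R.IsRootSystem) (l : List (Fin R.r)) :
    R.wordProd l.reverse = (R.wordProd l)⁻¹ := by
  induction l with
  | nil => simp [wordProd]
  | cons i l ih =>
    rw [List.reverse_cons, wordProd_append, ih, wordProd_cons, wordProd_cons, mul_inv_rev,
      hR.S_inv]
    rfl

lemma mem_weylGroup_iff (hR : R.IsRootSystem) : g ∈ R.weylGroup ↔ ∃ l, R.wordProd l = g := by
  refine ⟨fun hg => ?_, fun ⟨l, hl⟩ => hl ▸ wordProd_mem_weylGroup l⟩
  induction hg using Subgroup.closure_induction with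
  | mem _ hx => obtain ⟨i, rfl⟩ := hx; exact ⟨[i], by simp [wordProd]⟩
  | one => exact ⟨[], rfl⟩
  | mul _ _ _ _ ha hb =>
    obtain ⟨l, rfl⟩ := ha; obtain ⟨m, rfl⟩ := hb; exact ⟨l ++ m, wordProd_append l m⟩
  | inv _ _ ha => obtain ⟨l, rfl⟩ := ha; exact ⟨l.reverse, hR.wordProd_reverse l⟩

lemma apply_mem (hR : R.IsRootSystem) (hg : g ∈ R.weylGroup) (hβ : β ∈ R.Φ) : g β ∈ R.Φ := by
  obtain ⟨l, rfl⟩ := hR.mem_weylGroup_iff.mp hg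
  clear hg
  induction l with
  | nil => exact hβ
  | cons i l ih =>
    rw [wordProd_cons, LinearEquiv.mul_apply]
    exact hR.s_apply_mem (hR.simple_mem i) ih

lemma coroot_eq (hR : R.IsRootSystem) (hβ : β ∈ R.Φ) {f : Module.Dual ℚ R.V} (hf : f β = 2)
    (hfΦ : ∀ γ ∈ R.Φ, Module.preReflection β f γ ∈ R.Φ) : R.coroot β = f :=
  Module.Dual.eq_of_preReflection_mapsTo hR.finite hR.span_top (hR.coroot_self β hβ)
    (fun γ hγ => hR.reflection_stable β hβ γ hγ) hf (fun γ hγ => hfΦ γ hγ)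

lemma coroot_apply_of_mapsTo (hR : R.IsRootSystem) (hgΦ : ∀ γ ∈ R.Φ, g γ ∈ R.Φ)
    (hgΦ' : ∀ γ ∈ R.Φ, g⁻¹ γ ∈ R.Φ) (hβ : β ∈ R.Φ) (v : R.V) :
    R.coroot (g β) v = R.coroot β (g⁻¹ v) := by
  rw [hR.coroot_eq (hgΦ β hβ) (f := (R.coroot β).comp (g⁻¹ : R.Aut).toLinearMap)]
  · rfl
  · simp [hR.coroot_self β hβ]
  · intro γ hγ
    have : Module.preReflection (g β) ((R.coroot β).comp (g⁻¹ : R.Aut).toLinearMap) γ =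
        g (R.s β (g⁻¹ γ)) := by
      simp [Module.preReflection_apply, hR.s_apply hβ]
    rw [this]
    exact hgΦ _ (hR.s_apply_mem hβ (hgΦ' γ hγ))

lemma coroot_apply (hR : R.IsRootSystem) (hg : g ∈ R.weylGroup) (hβ : β ∈ R.Φ) (v : R.V) :
    R.coroot (g β) v = R.coroot β (g⁻¹ v) :=
  hR.coroot_apply_of_mapsTo (fun _ => hR.apply_mem hg) (fun _ => hR.apply_mem (inv_mem hg)) hβ v

lemma mul_s_mul_inv (hR : R.IsRootSystem) (hg : g ∈ R.weylGroup) (hβ : β ∈ R.Φ) :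
    g * R.s β * g⁻¹ = R.s (g β) := by
  ext v
  simp [hR.s_apply hβ, hR.s_apply (hR.apply_mem hg hβ), hR.coroot_apply hg hβ]

lemma s_smul (hR : R.IsRootSystem) (hβ : β ∈ R.Φ) {c : ℚ} (hc : c ≠ 0) (hcβ : c • β ∈ R.Φ) :
    R.s (c • β) = R.s β := by
  have hcor : R.coroot (c • β) = c⁻¹ • R.coroot β := by
    refine hR.coroot_eq hcβ ?_ fun γ hγ => ?_
    · simp [hR.coroot_self β hβ, hc]
    · have : Module.preReflection (c • β) (c⁻¹ • R.coroot β) γ = R.s β γ := by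
        simp [Module.preReflection_apply, hR.s_apply hβ, smul_smul, mul_right_comm _ _ c, hc]
      rw [this]
      exact hR.s_apply_mem hβ hγ
  ext v
  simp [hR.s_apply hβ, hR.s_apply hcβ, hcor, smul_smul, mul_right_comm _ _ c, hc]

lemma s_neg (hR : R.IsRootSystem) (hβ : β ∈ R.Φ) : R.s (-β) = R.s β := by
  simpa using hR.s_smul hβ (c := -1) (by norm_num) (by simpa using hR.neg_mem hβ)

noncomputable def rootForm (hR : R.IsRootSystem) : LinearMap.BilinForm ℚ R.V :=
  ∑ β ∈ hR.finite.toFinset, (R.coroot β).smulRight (R.coroot β)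

lemma rootForm_apply (hR : R.IsRootSystem) (x y : R.V) :
    hR.rootForm x y = ∑ β ∈ hR.finite.toFinset, R.coroot β x * R.coroot β y := by
  simp [rootForm]

lemma rootForm_s_s (hR : R.IsRootSystem) (hγ : γ ∈ R.Φ) (x y : R.V) :
    hR.rootForm (R.s γ x) (R.s γ y) = hR.rootForm x y := by
  have hΦ : ∀ β ∈ R.Φ, R.s γ β ∈ R.Φ := fun β => hR.s_apply_mem hγ
  have hΦ' : ∀ β ∈ R.Φ, (R.s γ)⁻¹ β ∈ R.Φ := by rw [hR.s_inv hγ]; exact hΦ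
  have hinv : ∀ β, R.s γ (R.s γ β) = β := by
    rw [hR.s_eq_reflection hγ]; exact Module.involutive_reflection _
  simp only [rootForm_apply]
  refine Finset.sum_nbij' (R.s γ) (R.s γ) (by simpa using hΦ) (by simpa using hΦ)
    (fun β _ => hinv β) (fun β _ => hinv β) fun β hβ => ?_
  rw [Set.Finite.mem_toFinset] at hβ
  rw [hR.coroot_apply_of_mapsTo hΦ hΦ' hβ, hR.coroot_apply_of_mapsTo hΦ hΦ' hβ, hR.s_inv hγ]

lemma coroot_mul_rootForm_self (hR : R.IsRootSystem) (hγ : γ ∈ R.Φ) (v : R.V) :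
    R.coroot γ v * hR.rootForm γ γ = 2 * hR.rootForm v γ := by
  have h := hR.rootForm_s_s hγ v γ
  simp only [hR.s_apply_self hγ, hR.s_apply hγ v, map_neg, map_sub, map_smul,
    LinearMap.sub_apply, LinearMap.smul_apply, smul_eq_mul] at h
  linarith

lemma rootForm_self_pos (hR : R.IsRootSystem) (hγ : γ ∈ R.Φ) : 0 < hR.rootForm γ γ := by
  rw [rootForm_apply]
  calc (0 : ℚ) < R.coroot γ γ * R.coroot γ γ := by rw [hR.coroot_self γ hγ]; norm_num
    _ ≤ _ := Finset.single_le_sum (fun β _ => mul_self_nonneg (R.coroot β γ))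
      (hR.finite.mem_toFinset.mpr hγ)

lemma coroot_nonneg_of_dominant (hR : R.IsRootSystem) {lam : R.V} (hlam : R.Dominant lam)
    (hγ : γ ∈ R.pos) : 0 ≤ R.coroot γ lam := by
  have hsimple : ∀ j, 0 ≤ hR.rootForm lam (R.α j) := fun j => by
    have := hR.coroot_mul_rootForm_self (hR.simple_mem j) lam
    nlinarith [hlam j, hR.rootForm_self_pos (hR.simple_mem j)]
  -- `⟨λ, γ^∨⟩ (γ, γ) = 2 (λ, γ)`, and `(λ, γ)` is a nonnegative combination of the `(λ, α_j)`.
  obtain ⟨c, hc, rfl⟩ := hR.pos_nonneg_comb γ hγ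
  have hform : 0 ≤ hR.rootForm lam (∑ i, c i • R.α i) := by
    simp only [map_sum, map_smul, smul_eq_mul]
    exact Finset.sum_nonneg fun j _ => mul_nonneg (hc j) (hsimple j)
  have := hR.coroot_mul_rootForm_self (hR.pos_subset hγ) lam
  exact nonneg_of_mul_nonneg_left (by linarith) (hR.rootForm_self_pos (hR.pos_subset hγ))

lemma pos_or_neg_pos (hR : R.IsRootSystem) (hβ : β ∈ R.Φ) : β ∈ R.pos ∨ -β ∈ R.pos := by
  rcases hR.pos_or_neg β hβ with h | h
  · exact Or.inl h.1
  · exact Or.inr h.2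

lemma neg_not_pos (hR : R.IsRootSystem) (hβ : β ∈ R.pos) : -β ∉ R.pos := by
  rcases hR.pos_or_neg β (hR.pos_subset hβ) with h | h
  · exact h.2
  · exact absurd hβ h.1

lemma eq_smul_simple_of_neg_S_apply_pos (hR : R.IsRootSystem) {i : Fin R.r} {η : R.V}
    (hη : η ∈ R.pos) (hneg : -R.S i η ∈ R.pos) : ∃ c : ℚ, 0 < c ∧ η = c • R.α i := by
  obtain ⟨a, ha, haη⟩ := hR.pos_nonneg_comb η hη
  obtain ⟨b, hb, hbη⟩ := hR.pos_nonneg_comb _ hneg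
  have hzero : ∀ k, a k + b k - (Pi.single i (R.coroot (R.α i) η) : Fin R.r → ℚ) k = 0 := by
    refine Fintype.linearIndependent_iff.mp hR.indep _ ?_
    simp only [add_smul, sub_smul, Finset.sum_add_distrib, Finset.sum_sub_distrib, ← haη, ← hbη,
      hR.s_apply (hR.simple_mem i), S]
    simp
  have hη' : η = a i • R.α i := by
    rw [haη, Finset.sum_eq_single i (fun k _ hk => ?_) (by simp)]
    have := hzero k
    simp only [Pi.single_eq_of_ne hk, sub_zero] at this
    rw [show a k = 0 by linarith [ha k, hb k], zero_smul]
  refine ⟨a i, (ha i).lt_of_ne fun h0 => ?_, hη'⟩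
  exact hR.ne_zero η (hR.pos_subset hη) (by rw [hη', ← h0, zero_smul])

lemma exists_reduced_word (hR : R.IsRootSystem) (hg : g ∈ R.weylGroup) :
    ∃ l, R.wordProd l = g ∧ l.length = R.len g := by
  obtain ⟨l, hl, hlg⟩ := Nat.sInf_mem (s := {n | ∃ l, l.length = n ∧ R.wordProd l = g})
    ((hR.mem_weylGroup_iff.mp hg).elim fun l hl => ⟨l.length, l, rfl, hl⟩)
  exact ⟨l, hlg, hl⟩

lemma len_inv (hR : R.IsRootSystem) (hg : g ∈ R.weylGroup) : R.len g⁻¹ = R.len g := by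
  have key : ∀ h ∈ R.weylGroup, R.len h⁻¹ ≤ R.len h := fun h hh => by
    obtain ⟨l, rfl, hl⟩ := hR.exists_reduced_word hh
    simpa [hl] using len_le_length (hR.wordProd_reverse l)
  exact le_antisymm (key g hg) (by simpa using key g⁻¹ (inv_mem hg))

lemma len_S_mul_le (hR : R.IsRootSystem) (hg : g ∈ R.weylGroup) (i : Fin R.r) :
    R.len (R.S i * g) ≤ R.len g + 1 := by
  obtain ⟨l, rfl, hl⟩ := hR.exists_reduced_word hg
  simpa [hl] using len_le_length (l := i :: l) (wordProd_cons i l)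

lemma len_le_len_S_mul (hR : R.IsRootSystem) (hg : g ∈ R.weylGroup) (i : Fin R.r) :
    R.len g ≤ R.len (R.S i * g) + 1 := by
  simpa [hR.S_mul_S_mul] using hR.len_S_mul_le (mul_mem (S_mem_weylGroup i) hg) i

theorem strong_exchange (hR : R.IsRootSystem) (l : List (Fin R.r)) (hγ : γ ∈ R.pos)
    (hneg : -R.wordProd l γ ∈ R.pos) :
    ∃ l', l'.Sublist l ∧ l'.length + 1 = l.length ∧ R.wordProd l' = R.wordProd l * R.s γ := by
  induction l with
  | nil => exact absurd hneg (hR.neg_not_pos hγ)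
  | cons i l ih =>
    have hu := wordProd_mem_weylGroup l
    rcases hR.pos_or_neg_pos (hR.apply_mem hu (hR.pos_subset hγ)) with hpos | hneg'
    · -- `s_i` is the letter making `wordProd l γ` negative, so `wordProd l γ ∈ ℚ α_i`
      -- and conjugating `s_γ` by `wordProd l` gives `s_i`.
      rw [wordProd_cons, LinearEquiv.mul_apply] at hneg
      obtain ⟨c, hc, hcγ⟩ := hR.eq_smul_simple_of_neg_S_apply_pos hpos hneg
      have hconj : R.wordProd l * R.s γ = R.S i * R.wordProd l := by
        have h := hR.mul_s_mul_inv hu (hR.pos_subset hγ)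
        rw [hcγ, hR.s_smul (hR.simple_mem i) hc.ne' (hcγ ▸ hR.apply_mem hu (hR.pos_subset hγ))]
          at h
        rw [S, ← h]
        group
      refine ⟨l, List.sublist_cons_self i l, rfl, ?_⟩
      rw [wordProd_cons, mul_assoc, hconj, ← mul_assoc, hR.S_mul_self, one_mul]
    · obtain ⟨l', hsub, hlen, hprod⟩ := ih hneg'
      exact ⟨i :: l', hsub.cons_cons i, by simp [← hlen],
        by rw [wordProd_cons, wordProd_cons, hprod, mul_assoc]⟩

lemma len_mul_s_lt (hR : R.IsRootSystem) (hg : g ∈ R.weylGroup) (hγ : γ ∈ R.pos)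
    (hneg : -g γ ∈ R.pos) : R.len (g * R.s γ) < R.len g := by
  obtain ⟨l, rfl, hl⟩ := hR.exists_reduced_word hg
  obtain ⟨l', -, hlen, hprod⟩ := hR.strong_exchange l hγ hneg
  have := len_le_length hprod
  omega

lemma S_mul_eq_mul_s (hR : R.IsRootSystem) (hg : g ∈ R.weylGroup) (i : Fin R.r) :
    R.S i * g = g * R.s (g⁻¹ (R.α i)) := by
  rw [← hR.mul_s_mul_inv (inv_mem hg) (hR.simple_mem i), S]
  group

lemma len_S_mul_lt_of_neg_pos (hR : R.IsRootSystem) (hg : g ∈ R.weylGroup) {i : Fin R.r}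
    (h : -g⁻¹ (R.α i) ∈ R.pos) : R.len (R.S i * g) < R.len g := by
  rw [hR.S_mul_eq_mul_s hg, ← hR.s_neg (hR.apply_mem (inv_mem hg) (hR.simple_mem i))]
  exact hR.len_mul_s_lt hg h (by simpa using hR.simple_pos i)

lemma len_lt_len_S_mul_of_pos (hR : R.IsRootSystem) (hg : g ∈ R.weylGroup) {i : Fin R.r}
    (h : g⁻¹ (R.α i) ∈ R.pos) : R.len g < R.len (R.S i * g) := by
  have := hR.len_S_mul_lt_of_neg_pos (mul_mem (S_mem_weylGroup i) hg) (i := i)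
    (by simpa [hR.S_inv, hR.S_apply_simple] using h)
  rwa [hR.S_mul_S_mul] at this

lemma len_S_mul_lt_iff (hR : R.IsRootSystem) (hg : g ∈ R.weylGroup) {i : Fin R.r} :
    R.len (R.S i * g) < R.len g ↔ -g⁻¹ (R.α i) ∈ R.pos :=
  ⟨fun h => (hR.pos_or_neg_pos (hR.apply_mem (inv_mem hg) (hR.simple_mem i))).resolve_left
    fun hpos => lt_asymm h (hR.len_lt_len_S_mul_of_pos hg hpos), hR.len_S_mul_lt_of_neg_pos hg⟩

lemma len_S_mul_lt_or_lt (hR : R.IsRootSystem) (hg : g ∈ R.weylGroup) (i : Fin R.r) :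
    R.len (R.S i * g) < R.len g ∨ R.len g < R.len (R.S i * g) :=
  (hR.pos_or_neg_pos (hR.apply_mem (inv_mem hg) (hR.simple_mem i))).symm.imp
    (hR.len_S_mul_lt_of_neg_pos hg) (hR.len_lt_len_S_mul_of_pos hg)

lemma exists_sublist_eq_S_mul (hR : R.IsRootSystem) {l : List (Fin R.r)} {i : Fin R.r}
    (h : R.len (R.S i * R.wordProd l) < R.len (R.wordProd l)) :
    ∃ l', l'.Sublist l ∧ l'.length + 1 = l.length ∧ R.wordProd l' = R.S i * R.wordProd l := by
  have hg := wordProd_mem_weylGroup l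
  obtain ⟨l', hsub, hlen, hprod⟩ :=
    hR.strong_exchange l ((hR.len_S_mul_lt_iff hg).mp h) (by simpa using hR.simple_pos i)
  refine ⟨l', hsub, hlen, ?_⟩
  rw [hprod, hR.s_neg (hR.apply_mem (inv_mem hg) (hR.simple_mem i)), hR.S_mul_eq_mul_s hg]

lemma exists_reduced_sublist (hR : R.IsRootSystem) (l : List (Fin R.r)) :
    ∃ m, m.Sublist l ∧ R.Reduced m ∧ R.wordProd m = R.wordProd l := by
  induction l with
  | nil => exact ⟨[], .refl _, Nat.le_zero.mp (len_le_length rfl), rfl⟩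
  | cons i l ih =>
    obtain ⟨m, hsub, hred, hprod⟩ := ih
    have hg := wordProd_mem_weylGroup m
    have hup := hR.len_S_mul_le hg i
    have hdown := hR.len_le_len_S_mul hg i
    rcases hR.len_S_mul_lt_or_lt hg i with hlt | hlt
    · obtain ⟨m', hsub', hlen, hprod'⟩ := hR.exists_sublist_eq_S_mul hlt
      refine ⟨m', hsub'.trans (hsub.cons i), ?_, by rw [hprod', hprod, wordProd_cons]⟩
      have := len_le_length hprod'
      rw [Reduced, hprod']
      rw [Reduced] at hred
      omega
    · refine ⟨i :: m, hsub.cons_cons i, ?_, by rw [wordProd_cons, wordProd_cons, hprod]⟩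
      rw [Reduced, wordProd_cons, List.length_cons]
      rw [Reduced] at hred
      omega

end IsRootSystem

/-- The Bruhat order generated by reflections; unlike `BruhatLE` it refers to no reduced word. -/
def BruhatStep (R : RootData) (g h : R.Aut) : Prop :=
  g ∈ R.weylGroup ∧ h ∈ R.weylGroup ∧ ∃ γ ∈ R.pos, h = g * R.s γ ∧ R.len g < R.len h

def BruhatChain (R : RootData) : R.Aut → R.Aut → Prop := Relation.ReflTransGen R.BruhatStep

lemma BruhatChain.mem_weylGroup (hgh : R.BruhatChain g h) (hg : g ∈ R.weylGroup) :
    h ∈ R.weylGroup := by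
  induction hgh with
  | refl => exact hg
  | tail _ hs _ => exact hs.2.1

lemma BruhatStep.exists_apply_pos (hR : R.IsRootSystem) (hs : R.BruhatStep g h) :
    ∃ γ ∈ R.pos, g γ ∈ R.pos ∧ h = g * R.s γ := by
  obtain ⟨hg, -, γ, hγ, rfl, hlt⟩ := hs
  refine ⟨γ, hγ, (hR.pos_or_neg_pos (hR.apply_mem hg (hR.pos_subset hγ))).resolve_right
    fun hneg => ?_, rfl⟩
  exact lt_asymm hlt (hR.len_mul_s_lt hg hγ hneg)

namespace IsRootSystem

lemma bruhatStep_S_mul (hR : R.IsRootSystem) (hg : g ∈ R.weylGroup) {i : Fin R.r}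
    (h : R.len g < R.len (R.S i * g)) : R.BruhatStep g (R.S i * g) := by
  refine ⟨hg, mul_mem (S_mem_weylGroup i) hg, ?_⟩
  rcases hR.pos_or_neg_pos (hR.apply_mem (inv_mem hg) (hR.simple_mem i)) with hpos | hneg
  · exact ⟨_, hpos, hR.S_mul_eq_mul_s hg i, h⟩
  · refine ⟨_, hneg, ?_, h⟩
    rw [hR.s_neg (hR.apply_mem (inv_mem hg) (hR.simple_mem i)), hR.S_mul_eq_mul_s hg i]

lemma bruhatChain_dmulStep (hR : R.IsRootSystem) (hg : g ∈ R.weylGroup) (i : Fin R.r) :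
    R.BruhatChain g (R.dmulStep i g) := by
  unfold dmulStep
  split_ifs with h
  exacts [.single (hR.bruhatStep_S_mul hg h), .refl]

theorem exists_sublist_of_bruhatChain (hR : R.IsRootSystem) (hgh : R.BruhatChain g h)
    {l : List (Fin R.r)} (hl : R.Reduced l) (hlh : R.wordProd l = h) :
    ∃ l', l'.Sublist l ∧ R.wordProd l' = g := by
  induction hgh generalizing l with
  | refl => exact ⟨l, .refl l, hlh⟩
  | tail _ hs ih =>
    obtain ⟨γ, hγ, hγpos, rfl⟩ := hs.exists_apply_pos hR
    obtain ⟨l₁, hl₁, -, hprod₁⟩ := hR.strong_exchange l hγ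
      (by simpa [hlh, hR.s_apply_self (hR.pos_subset hγ)] using hγpos)
    obtain ⟨l₂, hl₂, hred₂, hprod₂⟩ := hR.exists_reduced_sublist l₁
    obtain ⟨l', hl', hprod'⟩ := ih hred₂
      (by rw [hprod₂, hprod₁, hlh, mul_assoc, hR.s_mul_self (hR.pos_subset hγ), mul_one])
    exact ⟨l', hl'.trans (hl₂.trans hl₁), hprod'⟩

end IsRootSystem

-- Truncations of the subword and lifting properties, proved by a joint induction on the length.
def SubwordPropertyUpTo (R : RootData) (N : ℕ) : Prop :=
  ∀ l l' : List (Fin R.r), R.Reduced l → l.length ≤ N → l'.Sublist l →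
    R.BruhatChain (R.wordProd l') (R.wordProd l)

def LiftingPropertyBelow (R : RootData) (N : ℕ) : Prop :=
  ∀ (i : Fin R.r) (u w : R.Aut), u ∈ R.weylGroup → R.BruhatChain u w → R.len w < N →
    R.BruhatChain (R.S i * u) (R.dmulStep i w)

namespace IsRootSystem

variable {N : ℕ} {i : Fin R.r}

lemma bruhatChain_S_mul_of_len_S_mul_lt (hR : R.IsRootSystem) (hQ : R.SubwordPropertyUpTo N)
    (hZ : R.LiftingPropertyBelow N) (hu : u ∈ R.weylGroup) (huw : R.BruhatChain u w)
    (hwN : R.len w ≤ N) (hwi : R.len (R.S i * w) < R.len w) : R.BruhatChain (R.S i * u) w := by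
  have hw := huw.mem_weylGroup hu
  have hsw := mul_mem (S_mem_weylGroup i) hw
  obtain ⟨c, hc, hclen⟩ := hR.exists_reduced_word hsw
  have hcred : R.Reduced c := by rw [Reduced, hc, hclen]
  have hw_le := hR.len_le_len_S_mul hw i
  have hcw : R.wordProd (i :: c) = w := by rw [wordProd_cons, hc, hR.S_mul_S_mul]
  have hred : R.Reduced (i :: c) := by rw [Reduced, hcw, List.length_cons]; omega
  obtain ⟨e, he, rfl⟩ := hR.exists_sublist_of_bruhatChain huw hred hcw
  rcases List.sublist_cons_iff.mp he with hec | ⟨d, rfl, hdc⟩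
  · have := hZ i _ _ (wordProd_mem_weylGroup e) (hc ▸ hQ c e hcred (by omega) hec) (by omega)
    rwa [dmulStep, if_pos (by rwa [hR.S_mul_S_mul]), hR.S_mul_S_mul] at this
  · rw [wordProd_cons, hR.S_mul_S_mul]
    have hstep := hR.bruhatStep_S_mul hsw (i := i) (by rwa [hR.S_mul_S_mul])
    rw [hR.S_mul_S_mul] at hstep
    exact (hc ▸ hQ c d hcred (by omega) hdc).tail hstep

lemma bruhatChain_S_mul_of_lt_len_S_mul (hR : R.IsRootSystem) (hZ : R.LiftingPropertyBelow N)
    (hu : u ∈ R.weylGroup) (huw : R.BruhatChain u w) (hwN : R.len w ≤ N)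
    (hwi : R.len w < R.len (R.S i * w)) : R.BruhatChain (R.S i * u) (R.S i * w) := by
  rcases huw.cases_tail with rfl | ⟨z, huz, hzw⟩
  · exact .refl
  have hz := BruhatChain.mem_weylGroup huz hu
  obtain ⟨-, hw, γ, hγ, rfl, hlt⟩ := id hzw
  refine (hZ i u z hu huz (by omega)).trans ?_
  unfold dmulStep
  split_ifs
  · have := hR.len_S_mul_le hz i
    exact .single ⟨mul_mem (S_mem_weylGroup i) hz, mul_mem (S_mem_weylGroup i) hw, γ, hγ,
      (mul_assoc _ _ _).symm, by omega⟩
  · exact .tail (.single hzw) (hR.bruhatStep_S_mul hw hwi)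

lemma liftingPropertyBelow_succ (hR : R.IsRootSystem) (hQ : R.SubwordPropertyUpTo N)
    (hZ : R.LiftingPropertyBelow N) : R.LiftingPropertyBelow (N + 1) := by
  intro i u w hu huw hwN
  rcases hR.len_S_mul_lt_or_lt (huw.mem_weylGroup hu) i with hwi | hwi
  · rw [dmulStep, if_neg (by omega)]
    exact hR.bruhatChain_S_mul_of_len_S_mul_lt hQ hZ hu huw (by omega) hwi
  · rw [dmulStep, if_pos hwi]
    exact hR.bruhatChain_S_mul_of_lt_len_S_mul hZ hu huw (by omega) hwi

lemma subwordPropertyUpTo_succ (hR : R.IsRootSystem) (hQ : R.SubwordPropertyUpTo N)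
    (hZ : R.LiftingPropertyBelow (N + 1)) : R.SubwordPropertyUpTo (N + 1) := by
  rintro (_ | ⟨i, b⟩) l' hred hlen hsub
  · rw [List.sublist_nil.mp hsub]
    exact .refl
  have hb := wordProd_mem_weylGroup b
  have hup := hR.len_S_mul_le hb i
  have hb_le := len_le_length (l := b) rfl
  rw [Reduced, wordProd_cons, List.length_cons] at hred
  have hbred : R.Reduced b := by rw [Reduced]; omega
  have hbi : R.len (R.wordProd b) < R.len (R.S i * R.wordProd b) := by omega
  have hbN : b.length ≤ N := by simpa using hlen
  rcases List.sublist_cons_iff.mp hsub with hdb | ⟨d, rfl, hdb⟩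
  · rw [wordProd_cons]
    exact (hQ b l' hbred hbN hdb).tail (hR.bruhatStep_S_mul hb hbi)
  · have := hZ i _ _ (wordProd_mem_weylGroup d) (hQ b d hbred hbN hdb) (by omega)
    rwa [dmulStep, if_pos hbi, ← wordProd_cons, ← wordProd_cons] at this

lemma subwordPropertyUpTo_and_liftingPropertyBelow (hR : R.IsRootSystem) (N : ℕ) :
    R.SubwordPropertyUpTo N ∧ R.LiftingPropertyBelow N := by
  induction N with
  | zero =>
    refine ⟨fun l l' _ hl hsub => ?_, fun _ _ _ _ _ h => absurd h (Nat.not_lt_zero _)⟩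
    obtain rfl := List.length_eq_zero_iff.mp (Nat.le_zero.mp hl)
    obtain rfl := List.sublist_nil.mp hsub
    exact .refl
  | succ N ih =>
    have hZ := hR.liftingPropertyBelow_succ ih.1 ih.2
    exact ⟨hR.subwordPropertyUpTo_succ ih.1 hZ, hZ⟩

theorem bruhatChain_of_sublist (hR : R.IsRootSystem) {l l' : List (Fin R.r)} (hl : R.Reduced l)
    (h : l'.Sublist l) : R.BruhatChain (R.wordProd l') (R.wordProd l) :=
  (hR.subwordPropertyUpTo_and_liftingPropertyBelow l.length).1 l l' hl le_rfl h

theorem bruhatChain_S_mul_dmulStep (hR : R.IsRootSystem) (hu : u ∈ R.weylGroup)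
    (h : R.BruhatChain u w) (i : Fin R.r) : R.BruhatChain (R.S i * u) (R.dmulStep i w) :=
  (hR.subwordPropertyUpTo_and_liftingPropertyBelow (R.len w + 1)).2 i u w hu h (lt_add_one _)

theorem bruhatChain_wordProd_mul_dmulList (hR : R.IsRootSystem) {v : R.Aut}
    (hv : v ∈ R.weylGroup) {N N' : List (Fin R.r)} (h : N'.Sublist N) :
    R.BruhatChain (R.wordProd N' * v) (R.dmulList N v) := by
  induction h with
  | slnil =>
    rw [show R.wordProd [] = 1 from rfl, one_mul]
    exact .refl
  | cons i _ ih => exact ih.trans (hR.bruhatChain_dmulStep (dmulList_mem_weylGroup hv _) i)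
  | cons_cons i _ ih =>
    rw [wordProd_cons, mul_assoc]
    exact hR.bruhatChain_S_mul_dmulStep (mul_mem (wordProd_mem_weylGroup _) hv) ih i

lemma exists_dmul_eq_dmulList (hR : R.IsRootSystem) (hw : w ∈ R.weylGroup) (v : R.Aut) :
    ∃ l, R.Reduced l ∧ R.wordProd l = w ∧ R.dmul w v = R.dmulList l v := by
  have h : ∃ l, R.Reduced l ∧ R.wordProd l = w := (hR.exists_reduced_word hw).imp
    fun l ⟨hlw, hlen⟩ => ⟨by rw [Reduced, hlw, hlen], hlw⟩
  exact ⟨h.choose, h.choose_spec.1, h.choose_spec.2, by rw [dmul, dif_pos h]⟩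

lemma bruhatChain_of_bruhatLE (hR : R.IsRootSystem) (h : R.BruhatLE u w) : R.BruhatChain u w := by
  obtain ⟨l, hl, rfl, l', hsub, rfl⟩ := h
  exact hR.bruhatChain_of_sublist hl hsub

lemma bruhatChain_inv_of_bruhatLE (hR : R.IsRootSystem) (h : R.BruhatLE u w) :
    R.BruhatChain u⁻¹ w⁻¹ := by
  obtain ⟨l, hl, rfl, l', hsub, rfl⟩ := h
  rw [← hR.wordProd_reverse, ← hR.wordProd_reverse]
  refine hR.bruhatChain_of_sublist ?_ hsub.reverse
  rw [Reduced, hR.wordProd_reverse, hR.len_inv (wordProd_mem_weylGroup l), List.length_reverse]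
  exact hl

theorem bruhatChain_inv_mul_of_bruhatLE_dmul (hR : R.IsRootSystem) {u' v : R.Aut}
    (hu' : R.BruhatLE u' w) (hv : v ∈ R.weylGroup) (h : R.BruhatLE (R.dmul w⁻¹ v) u) :
    R.BruhatChain (u'⁻¹ * v) u := by
  have hw : w⁻¹ ∈ R.weylGroup := by
    obtain ⟨l, -, rfl, -⟩ := hu'
    exact inv_mem (wordProd_mem_weylGroup l)
  obtain ⟨c, hc, hcw, hdmul⟩ := hR.exists_dmul_eq_dmulList hw v
  obtain ⟨m, hmc, hm⟩ :=
    hR.exists_sublist_of_bruhatChain (hR.bruhatChain_inv_of_bruhatLE hu') hc hcw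
  rw [← hm]
  exact (hdmul ▸ hR.bruhatChain_wordProd_mul_dmulList hv hmc).trans (hR.bruhatChain_of_bruhatLE h)

theorem apply_inv_le_of_bruhatChain (hR : R.IsRootSystem) {a b : R.Aut} (h : R.BruhatChain a b)
    {lam : R.V} (hlam : R.Dominant lam) {f : Module.Dual ℚ R.V} (hf : ∀ β ∈ R.pos, 0 ≤ f β) :
    f (b⁻¹ lam) ≤ f (a⁻¹ lam) := by
  induction h with
  | refl => exact le_rfl
  | @tail g _ _ hs ih =>
    obtain ⟨γ, hγ, hgγ, rfl⟩ := hs.exists_apply_pos hR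
    have hγΦ := hR.pos_subset hγ
    have key : (g * R.s γ)⁻¹ lam = g⁻¹ lam - R.coroot (g γ) lam • γ := by
      rw [mul_inv_rev, hR.s_inv hγΦ, LinearEquiv.mul_apply, hR.s_apply hγΦ,
        hR.coroot_apply hs.1 hγΦ]
    rw [key, map_sub, map_smul, smul_eq_mul]
    nlinarith [hR.coroot_nonneg_of_dominant hlam hgγ, hf γ hγ]

lemma apply_nonneg_of_pos (hR : R.IsRootSystem) {f : Module.Dual ℚ R.V}
    (hf : ∀ j, 0 ≤ f (R.α j)) (hβ : β ∈ R.pos) : 0 ≤ f β := by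
  obtain ⟨c, hc, rfl⟩ := hR.pos_nonneg_comb β hβ
  simpa using Finset.sum_nonneg fun j _ => mul_nonneg (hc j) (hf j)

end IsRootSystem
end RootData

theorem statement9_general (R : RootData) (hR : R.IsRootSystem)
    (x : Fin R.r → Module.Dual ℚ R.V)
    (hx : ∀ i j : Fin R.r, x j (R.α i) = if i = j then 1 else 0)
    (lam : R.V) (hdom : R.Dominant lam)
    (w : R.Aut)
    (mu : R.V) (hmu : mu ∈ R.demPolytope lam w) :
    ∀ (i : Fin R.r) (u v : R.Aut), u ∈ R.weylGroup → v ∈ R.weylGroup →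
      R.BruhatLE (R.dmul w⁻¹ v) u →
      R.dualAct u (x i) lam ≤ R.dualAct v (x i) mu := by
  intro i u v _ hv hle
  refine convexHull_min ?_ (convex_halfSpace_ge (R.dualAct v (x i)).isLinear _) hmu
  rintro _ ⟨u', -, hu', rfl⟩
  have hxi : ∀ j, 0 ≤ x i (R.α j) := fun j => by rw [hx]; split_ifs <;> norm_num
  have := hR.apply_inv_le_of_bruhatChain (hR.bruhatChain_inv_mul_of_bruhatLE_dmul hu' hv hle)
    hdom fun _ => hR.apply_nonneg_of_pos hxi
  simpa [RootData.dualAct] using this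

theorem statement9 (R : RootData) (hR : R.IsRootSystem)
    (x : Fin R.r → Module.Dual ℚ R.V)
    (hx : ∀ i j : Fin R.r, x j (R.α i) = if i = j then 1 else 0)
    (lam : R.V) (hdom : R.Dominant lam)
    (w : R.Aut) (hw : w ∈ R.weylGroup)
    (mu : R.V) (hmu : mu ∈ R.demPolytope lam w) :
    ∀ (i : Fin R.r) (u v : R.Aut), u ∈ R.weylGroup → v ∈ R.weylGroup →
      R.BruhatLE (R.dmul w⁻¹ v) u →
      R.dualAct u (x i) lam ≤ R.dualAct v (x i) mu :=
  statement9_general R hR x hx lam hdom w mu hmu
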